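/- arXiv:2603.10281 — 8 statements merged into one kernel-verified Lean document; each statement's English description precedes it below -/
import Mathlib

section
/- Let E be a real inner product space. Suppose T₁ : E → E is δ₁-weakly θ₁-averaged and T₂ : E → E is δ₂-weakly θ₂-averaged, with δ₁, δ₂ ≥ 0 and θ₁, θ₂ ∈ (0,1). Set θ = (θ₁ + θ₂ − 2θ₁θ₂)/(1 − θ₁θ₂) and δ² = (δ₁²θ₁ + δ₂²θ₂)/θ. Then the composition T₁ ∘ T₂ is δ-weakly θ-averaged. -/
open RealInnerProductSpace

/-- A map `R` is δ-weakly nonexpansive if `‖R x - R y‖² ≤ ‖x - y‖² + δ²` for all `x, y`. -/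
def WeaklyNonexpansive {E : Type*} [NormedAddCommGroup E] [InnerProductSpace ℝ E]
    (δ : ℝ) (R : E → E) : Prop :=
  ∀ x y : E, ‖R x - R y‖ ^ 2 ≤ ‖x - y‖ ^ 2 + δ ^ 2

/-- A map `T` is δ-weakly θ-averaged if `T = θ • R + (1 - θ) • I` for some
δ-weakly nonexpansive `R`. -/
def WeaklyAveraged {E : Type*} [NormedAddCommGroup E] [InnerProductSpace ℝ E]
    (δ θ : ℝ) (T : E → E) : Prop :=
  ∃ R : E → E, WeaklyNonexpansive δ R ∧ T = fun x => θ • R x + (1 - θ) • x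

/-!
Writing `κ = (1 - θ) / θ`, a map `T` is δ-weakly θ-averaged iff
`‖T x - T y‖² + κ ‖(I - T) x - (I - T) y‖² ≤ ‖x - y‖² + θ δ²`, by the identity
`‖θ u + (1 - θ) v‖² + θ (1 - θ) ‖u - v‖² = θ ‖u‖² + (1 - θ) ‖v‖²`. For the composition,
`(I - T₁ T₂) x - (I - T₁ T₂) y = a + b` with `a = (I - T₂) x - (I - T₂) y` and
`b = (I - T₁) T₂ x - (I - T₁) T₂ y`; adding the inequalities of `T₂` at `x, y` and of `T₁` at
`T₂ x, T₂ y` leaves `κ₂ ‖a‖² + κ₁ ‖b‖²`, which dominates `κ ‖a + b‖²` as soon as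
`1 / κ = 1 / κ₁ + 1 / κ₂`, since `(κ₁ + κ₂) (κ₂ ‖a‖² + κ₁ ‖b‖²) - κ₁ κ₂ ‖a + b‖² = ‖κ₂ a - κ₁ b‖²`.
The stated `θ` is exactly the one with this property, and the error terms add up to
`θ₁ δ₁² + θ₂ δ₂² = θ δ²`.
-/

section

variable {E : Type*} [NormedAddCommGroup E] [InnerProductSpace ℝ E]

def AveragedInequality (κ ε : ℝ) (T : E → E) : Prop :=
  ∀ x y : E, ‖T x - T y‖ ^ 2 + κ * ‖(x - T x) - (y - T y)‖ ^ 2 ≤ ‖x - y‖ ^ 2 + ε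

lemma norm_convex_comb_sq_add_residual {θ : ℝ} (hθ : θ ≠ 0) (a b : E) :
    ‖θ • a + (1 - θ) • b‖ ^ 2 + (1 - θ) / θ * ‖b - (θ • a + (1 - θ) • b)‖ ^ 2 =
      θ * ‖a‖ ^ 2 + (1 - θ) * ‖b‖ ^ 2 := by
  simp only [← real_inner_self_eq_norm_sq, inner_add_left, inner_add_right, inner_sub_left,
    inner_sub_right, real_inner_smul_left, real_inner_smul_right, real_inner_comm b a]
  field_simp
  ring

lemma weaklyNonexpansive_iff_averagedInequality {δ θ : ℝ} (hθ : 0 < θ) (R : E → E) :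
    WeaklyNonexpansive δ R ↔
      AveragedInequality ((1 - θ) / θ) (θ * δ ^ 2) fun x => θ • R x + (1 - θ) • x := by
  refine forall₂_congr fun x y => ?_
  have key := norm_convex_comb_sq_add_residual hθ.ne' (R x - R y) (x - y)
  have hT : (θ • R x + (1 - θ) • x) - (θ • R y + (1 - θ) • y) =
      θ • (R x - R y) + (1 - θ) • (x - y) := by module
  have hres : (x - (θ • R x + (1 - θ) • x)) - (y - (θ • R y + (1 - θ) • y)) =
      (x - y) - (θ • (R x - R y) + (1 - θ) • (x - y)) := by module
  rw [hT, hres, key]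
  constructor <;> intro h <;> nlinarith

theorem weaklyAveraged_iff_averagedInequality {δ θ : ℝ} (hθ : 0 < θ) (T : E → E) :
    WeaklyAveraged δ θ T ↔ AveragedInequality ((1 - θ) / θ) (θ * δ ^ 2) T := by
  constructor
  · rintro ⟨R, hR, rfl⟩
    exact (weaklyNonexpansive_iff_averagedInequality hθ R).1 hR
  · intro hT
    let R : E → E := fun x => θ⁻¹ • (T x - (1 - θ) • x)
    have hTR : T = fun x => θ • R x + (1 - θ) • x := by
      funext x
      simp only [R, smul_smul, mul_inv_cancel₀ hθ.ne', one_smul, sub_add_cancel]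
    rw [hTR] at hT
    exact ⟨R, (weaklyNonexpansive_iff_averagedInequality hθ R).2 hT, hTR⟩

lemma mul_norm_add_sq_le {α β γ : ℝ} (hαβ : 0 < α + β) (hγ : γ * (α + β) = α * β)
    (a b : E) : γ * ‖a + b‖ ^ 2 ≤ α * ‖a‖ ^ 2 + β * ‖b‖ ^ 2 := by
  have key : α * β * ‖a + b‖ ^ 2 + ‖α • a - β • b‖ ^ 2 =
      (α + β) * (α * ‖a‖ ^ 2 + β * ‖b‖ ^ 2) := by
    simp only [← real_inner_self_eq_norm_sq, inner_add_left, inner_add_right, inner_sub_left,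
      inner_sub_right, real_inner_smul_left, real_inner_smul_right, real_inner_comm b a]
    ring
  refine le_of_mul_le_mul_right ?_ hαβ
  nlinarith [sq_nonneg ‖α • a - β • b‖]

theorem AveragedInequality.comp {κ₁ κ₂ κ ε₁ ε₂ : ℝ} {T₁ T₂ : E → E}
    (hκ : 0 < κ₁ + κ₂) (hκ' : κ * (κ₁ + κ₂) = κ₁ * κ₂)
    (h₁ : AveragedInequality κ₁ ε₁ T₁) (h₂ : AveragedInequality κ₂ ε₂ T₂) :
    AveragedInequality κ (ε₁ + ε₂) (T₁ ∘ T₂) := by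
  intro x y
  have hsplit : (x - T₁ (T₂ x)) - (y - T₁ (T₂ y)) =
      ((x - T₂ x) - (y - T₂ y)) + ((T₂ x - T₁ (T₂ x)) - (T₂ y - T₁ (T₂ y))) := by abel
  have hmix := mul_norm_add_sq_le (α := κ₂) (β := κ₁) (by linarith) (by linarith)
    ((x - T₂ x) - (y - T₂ y)) ((T₂ x - T₁ (T₂ x)) - (T₂ y - T₁ (T₂ y)))
  simp only [Function.comp_apply, hsplit]
  linarith [h₁ (T₂ x) (T₂ y), h₂ x y]

end

theorem stmt3_general {E : Type*} [NormedAddCommGroup E] [InnerProductSpace ℝ E]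
    (δ₁ δ₂ θ₁ θ₂ : ℝ)
    (hθ₁ : θ₁ ∈ Set.Ioo (0 : ℝ) 1) (hθ₂ : θ₂ ∈ Set.Ioo (0 : ℝ) 1)
    (T₁ T₂ : E → E)
    (h₁ : WeaklyAveraged δ₁ θ₁ T₁) (h₂ : WeaklyAveraged δ₂ θ₂ T₂)
    (θ δ : ℝ)
    (hθ : θ = (θ₁ + θ₂ - 2 * θ₁ * θ₂) / (1 - θ₁ * θ₂))
    (hδ : δ ^ 2 = (δ₁ ^ 2 * θ₁ + δ₂ ^ 2 * θ₂) / θ) :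
    WeaklyAveraged δ θ (T₁ ∘ T₂) := by
  obtain ⟨hθ₁0, hθ₁1⟩ := hθ₁
  obtain ⟨hθ₂0, hθ₂1⟩ := hθ₂
  have hden : 0 < 1 - θ₁ * θ₂ := by nlinarith
  have hnum : 0 < θ₁ + θ₂ - 2 * θ₁ * θ₂ := by nlinarith
  have hθpos : 0 < θ := hθ ▸ div_pos hnum hden
  rw [weaklyAveraged_iff_averagedInequality hθ₁0] at h₁
  rw [weaklyAveraged_iff_averagedInequality hθ₂0] at h₂
  rw [weaklyAveraged_iff_averagedInequality hθpos, hδ, mul_div_cancel₀ _ hθpos.ne']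
  rw [show δ₁ ^ 2 * θ₁ + δ₂ ^ 2 * θ₂ = θ₁ * δ₁ ^ 2 + θ₂ * δ₂ ^ 2 by ring]
  refine h₁.comp ?_ ?_ h₂
  · have hκ₁ : 0 < (1 - θ₁) / θ₁ := div_pos (by linarith) hθ₁0
    have hκ₂ : 0 < (1 - θ₂) / θ₂ := div_pos (by linarith) hθ₂0
    linarith
  · have h1θ : 1 - θ = (1 - θ₁) * (1 - θ₂) / (1 - θ₁ * θ₂) := by
      rw [hθ]; field_simp; ring
    rw [h1θ, hθ, div_div_div_cancel_right₀ hden.ne', div_add_div _ _ hθ₁0.ne' hθ₂0.ne',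
      div_mul_div_comm, div_mul_div_comm,
      div_eq_div_iff (by positivity) (mul_ne_zero hθ₁0.ne' hθ₂0.ne')]
    ring

theorem stmt3 {E : Type*} [NormedAddCommGroup E] [InnerProductSpace ℝ E]
    (δ₁ δ₂ θ₁ θ₂ : ℝ) (hδ₁ : 0 ≤ δ₁) (hδ₂ : 0 ≤ δ₂)
    (hθ₁ : θ₁ ∈ Set.Ioo (0 : ℝ) 1) (hθ₂ : θ₂ ∈ Set.Ioo (0 : ℝ) 1)
    (T₁ T₂ : E → E)
    (h₁ : WeaklyAveraged δ₁ θ₁ T₁) (h₂ : WeaklyAveraged δ₂ θ₂ T₂)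
    (θ δ : ℝ)
    (hθ : θ = (θ₁ + θ₂ - 2 * θ₁ * θ₂) / (1 - θ₁ * θ₂))
    (hδnn : 0 ≤ δ)
    (hδ : δ ^ 2 = (δ₁ ^ 2 * θ₁ + δ₂ ^ 2 * θ₂) / θ) :
    WeaklyAveraged δ θ (T₁ ∘ T₂) :=
  stmt3_general δ₁ δ₂ θ₁ θ₂ hθ₁ hθ₂ T₁ T₂ h₁ h₂ θ δ hθ hδ
end

section
/- Let E be a real inner product space, let ε > 0 and δ ≥ 0, and let D : E → E. Then D satisfies the (ε, δ)-weakly nonexpansive residual condition if and only if the map G = (1/(1+2ε)) • (2D − I) is Δ-weakly θ-averaged with θ = 2ε/(1+2ε) and Δ² = 4δ²(1 − θ)²/θ² (equivalently Δ² = δ²/ε²), where I denotes the identity map. -/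
open RealInnerProductSpace

/-- `D` satisfies the (ε, δ)-weakly nonexpansive residual condition:
`‖(D x - x) - (D y - y)‖² ≤ ε² ‖x - y‖² + δ²` for all `x, y`. -/
def ResidualCond {E : Type*} [NormedAddCommGroup E] [InnerProductSpace ℝ E]
    (ε δ : ℝ) (D : E → E) : Prop :=
  ∀ x y : E, ‖(D x - x) - (D y - y)‖ ^ 2 ≤ ε ^ 2 * ‖x - y‖ ^ 2 + δ ^ 2

/-! With `θ = 2ε/(1+2ε)` one has `1 - θ = 1/(1+2ε)`, so the only map `R` with
`G = θ • R + (1 - θ) • I` is the rescaled residual `R = ε⁻¹ • (D - I)`. Dividing the residual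
condition by `ε²` says exactly that this `R` is `(δ/ε)`-weakly nonexpansive. -/

section

variable {E : Type*} [NormedAddCommGroup E] [InnerProductSpace ℝ E]

theorem weaklyAveraged_iff_weaklyNonexpansive {δ θ : ℝ} (hθ : θ ≠ 0) (T : E → E) :
    WeaklyAveraged δ θ T ↔ WeaklyNonexpansive δ (fun x => θ⁻¹ • (T x - (1 - θ) • x)) := by
  constructor
  · rintro ⟨R, hR, rfl⟩
    simpa only [add_sub_cancel_right, inv_smul_smul₀ hθ] using hR
  · intro hR
    refine ⟨_, hR, funext fun x => ?_⟩
    rw [smul_inv_smul₀ hθ, sub_add_cancel]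

theorem residualCond_iff_weaklyNonexpansive {ε δ Δ : ℝ} (hε : ε ≠ 0)
    (hΔ : Δ ^ 2 = δ ^ 2 / ε ^ 2) (D : E → E) :
    ResidualCond ε δ D ↔ WeaklyNonexpansive Δ (fun x => ε⁻¹ • (D x - x)) := by
  have hε2 : 0 < ε ^ 2 := by positivity
  refine forall₂_congr fun x y => ?_
  rw [← smul_sub, norm_smul, mul_pow, Real.norm_eq_abs, sq_abs, hΔ, inv_pow,
    inv_mul_le_iff₀ hε2, mul_add, mul_div_cancel₀ _ hε2.ne']

end

theorem stmt5_general {E : Type*} [NormedAddCommGroup E] [InnerProductSpace ℝ E]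
    (ε δ : ℝ) (hε : 0 < ε) (D : E → E)
    (θ Δ : ℝ) (hθ : θ = 2 * ε / (1 + 2 * ε))
    (hΔ : Δ ^ 2 = 4 * δ ^ 2 * (1 - θ) ^ 2 / θ ^ 2) :
    ResidualCond ε δ D ↔
      WeaklyAveraged Δ θ (fun x => (1 / (1 + 2 * ε)) • (2 • D x - x)) := by
  have hθ0 : θ ≠ 0 := by rw [hθ]; positivity
  have hΔ' : Δ ^ 2 = δ ^ 2 / ε ^ 2 := by
    rw [hΔ, hθ]; field_simp; ring
  have hresidual : (fun x => θ⁻¹ • ((1 / (1 + 2 * ε)) • (2 • D x - x) - (1 - θ) • x))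
      = fun x => ε⁻¹ • (D x - x) := by
    funext x
    subst hθ
    match_scalars
    · field_simp
    · field_simp
      ring
  rw [weaklyAveraged_iff_weaklyNonexpansive hθ0, hresidual, residualCond_iff_weaklyNonexpansive hε.ne' hΔ']

theorem stmt5 {E : Type*} [NormedAddCommGroup E] [InnerProductSpace ℝ E]
    (ε δ : ℝ) (hε : 0 < ε) (hδ : 0 ≤ δ) (D : E → E)
    (θ Δ : ℝ) (hθ : θ = 2 * ε / (1 + 2 * ε))
    (hΔnn : 0 ≤ Δ) (hΔ : Δ ^ 2 = 4 * δ ^ 2 * (1 - θ) ^ 2 / θ ^ 2) :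
    ResidualCond ε δ D ↔
      WeaklyAveraged Δ θ (fun x => (1 / (1 + 2 * ε)) • (2 • D x - x)) :=
  stmt5_general ε δ hε D θ Δ hθ hΔ
end

section
/- Let E be a real inner product space, let δ ≥ 0, let R : E → E be δ-weakly nonexpansive, and let a, b > 0. Define T : E → E by T(x) = a·x − b·R(x). Then for all x, y ∈ E: ‖T(x) − T(y)‖² ≤ (a + b)²‖x − y‖² + b(a + b)δ². -/
open RealInnerProductSpace

/-! Triangle inequality `‖a u - b v‖ ≤ a ‖u‖ + b ‖v‖`, then the weighted Cauchy–Schwarz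
inequality `(a s + b t)² ≤ (a + b)(a s² + b t²)`, whose gap is `a b (s - t)²`; finally
`‖R x - R y‖² ≤ ‖x - y‖² + δ²` inside the second term. -/

theorem sq_mul_add_mul_le {a b : ℝ} (ha : 0 ≤ a) (hb : 0 ≤ b) (s t : ℝ) :
    (a * s + b * t) ^ 2 ≤ (a + b) * (a * s ^ 2 + b * t ^ 2) := by
  have hgap : (a + b) * (a * s ^ 2 + b * t ^ 2) - (a * s + b * t) ^ 2 = a * b * (s - t) ^ 2 := by
    ring
  linarith [mul_nonneg (mul_nonneg ha hb) (sq_nonneg (s - t))]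

theorem norm_smul_sub_smul_sq_le {E : Type*} [SeminormedAddCommGroup E] [NormedSpace ℝ E]
    {a b : ℝ} (ha : 0 ≤ a) (hb : 0 ≤ b) (u v : E) :
    ‖a • u - b • v‖ ^ 2 ≤ (a + b) * (a * ‖u‖ ^ 2 + b * ‖v‖ ^ 2) := by
  have htri : ‖a • u - b • v‖ ≤ a * ‖u‖ + b * ‖v‖ := by
    calc ‖a • u - b • v‖ ≤ ‖a • u‖ + ‖b • v‖ := norm_sub_le _ _
      _ = a * ‖u‖ + b * ‖v‖ := by rw [norm_smul_of_nonneg ha, norm_smul_of_nonneg hb]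
  calc ‖a • u - b • v‖ ^ 2 ≤ (a * ‖u‖ + b * ‖v‖) ^ 2 := by gcongr
    _ ≤ (a + b) * (a * ‖u‖ ^ 2 + b * ‖v‖ ^ 2) := sq_mul_add_mul_le ha hb _ _

theorem stmt7_general {E : Type*} [NormedAddCommGroup E] [InnerProductSpace ℝ E]
    (δ : ℝ) (R : E → E) (hR : WeaklyNonexpansive δ R)
    (a b : ℝ) (ha : 0 < a) (hb : 0 < b) :
    ∀ x y : E,
      ‖(a • x - b • R x) - (a • y - b • R y)‖ ^ 2
        ≤ (a + b) ^ 2 * ‖x - y‖ ^ 2 + b * (a + b) * δ ^ 2 := by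
  intro x y
  have hdiff : (a • x - b • R x) - (a • y - b • R y) = a • (x - y) - b • (R x - R y) := by
    simp only [smul_sub]
    abel
  calc ‖(a • x - b • R x) - (a • y - b • R y)‖ ^ 2
      ≤ (a + b) * (a * ‖x - y‖ ^ 2 + b * ‖R x - R y‖ ^ 2) := by
        rw [hdiff]
        exact norm_smul_sub_smul_sq_le ha.le hb.le _ _
    _ ≤ (a + b) * (a * ‖x - y‖ ^ 2 + b * (‖x - y‖ ^ 2 + δ ^ 2)) := by
        gcongr
        exact hR x y
    _ = (a + b) ^ 2 * ‖x - y‖ ^ 2 + b * (a + b) * δ ^ 2 := by ring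

theorem stmt7 {E : Type*} [NormedAddCommGroup E] [InnerProductSpace ℝ E]
    (δ : ℝ) (hδ : 0 ≤ δ) (R : E → E) (hR : WeaklyNonexpansive δ R)
    (a b : ℝ) (ha : 0 < a) (hb : 0 < b) :
    ∀ x y : E,
      ‖(a • x - b • R x) - (a • y - b • R y)‖ ^ 2
        ≤ (a + b) ^ 2 * ‖x - y‖ ^ 2 + b * (a + b) * δ ^ 2 :=
  stmt7_general δ R hR a b ha hb
end

section
/- Let E be a real inner product space, let ε ∈ [0,1) and δ ≥ 0, and let T : E → E satisfy ‖T(x) − T(y)‖² ≤ ε²‖x − y‖² + δ² for all x, y ∈ E. Suppose v* ∈ E is a fixed point of T (T(v*) = v*), and define the sequence v⁽⁰⁾ ∈ E, v⁽ᵏ⁺¹⁾ = T(v⁽ᵏ⁾). Then for every k ≥ 0: ‖v⁽ᵏ⁾ − v*‖² ≤ ε^{2k}‖v⁽⁰⁾ − v*‖² + δ²/(1 − ε²); consequently lim sup_{k→∞} ‖v⁽ᵏ⁾ − v*‖ ≤ δ/√(1 − ε²), i.e., the iterates converge into a ball of radius δ/√(1 − ε²) around v*. -/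
/-!
Along the orbit the squared distance `a k = ‖v k - v*‖²` to the fixed point satisfies the affine
recursion `a (k+1) ≤ ε² a k + δ²`, and `δ²/(1-ε²)` is the fixed point of `t ↦ ε² t + δ²`, so by
induction `a k ≤ ε^(2k) a 0 + δ²/(1-ε²)`. The geometric term dies out, hence the distances are
eventually below any radius exceeding `√(δ²/(1-ε²)) = δ/√(1-ε²)`.
-/

open Filter Topology

def WeaklyContractive {E : Type*} [SeminormedAddCommGroup E] (ε δ : ℝ) (T : E → E) : Prop :=
  ∀ x y : E, ‖T x - T y‖ ^ 2 ≤ ε ^ 2 * ‖x - y‖ ^ 2 + δ ^ 2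

theorem le_pow_mul_add_div_of_forall_succ_le {a : ℕ → ℝ} {q b : ℝ} (hq0 : 0 ≤ q) (hq1 : q < 1)
    (hb : 0 ≤ b) (h : ∀ k, a (k + 1) ≤ q * a k + b) (k : ℕ) :
    a k ≤ q ^ k * a 0 + b / (1 - q) := by
  have hpos : 0 < 1 - q := sub_pos.mpr hq1
  induction k with
  | zero => simpa using div_nonneg hb hpos.le
  | succ k ih =>
    have hfix : q * (b / (1 - q)) + b = b / (1 - q) := by
      field_simp
      ring
    calc a (k + 1) ≤ q * a k + b := h k
      _ ≤ q * (q ^ k * a 0 + b / (1 - q)) + b := by gcongr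
      _ = q ^ (k + 1) * a 0 + b / (1 - q) := by linear_combination hfix

theorem limsup_le_sqrt_of_sq_le_pow_mul_add {u : ℕ → ℝ} {q A C : ℝ} (hu : ∀ k, 0 ≤ u k)
    (hq0 : 0 ≤ q) (hq1 : q < 1) (h : ∀ k, u k ^ 2 ≤ q ^ k * A + C) :
    limsup u atTop ≤ √C := by
  have hbound : Tendsto (fun k => √(q ^ k * A + C)) atTop (𝓝 √C) := by
    have hgeom := (tendsto_pow_atTop_nhds_zero_of_lt_one hq0 hq1).mul_const A |>.add_const C
    simpa using hgeom.sqrt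
  calc limsup u atTop ≤ limsup (fun k => √(q ^ k * A + C)) atTop :=
        limsup_le_limsup (.of_forall fun k => Real.le_sqrt_of_sq_le (h k))
          (isCoboundedUnder_le_of_le _ hu) hbound.isBoundedUnder_le
    _ = √C := hbound.limsup_eq

section WeaklyContractive

variable {E : Type*} [SeminormedAddCommGroup E] {ε δ : ℝ} {T : E → E}

theorem WeaklyContractive.norm_sub_fixedPoint_sq_le (hT : WeaklyContractive ε δ T) {x' : E}
    (hx' : T x' = x') {v : ℕ → E} (hv : ∀ k, v (k + 1) = T (v k)) (hε : ε ^ 2 < 1) (k : ℕ) :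
    ‖v k - x'‖ ^ 2 ≤ ε ^ (2 * k) * ‖v 0 - x'‖ ^ 2 + δ ^ 2 / (1 - ε ^ 2) := by
  rw [pow_mul]
  refine le_pow_mul_add_div_of_forall_succ_le (a := fun k => ‖v k - x'‖ ^ 2) (sq_nonneg ε) hε
    (sq_nonneg δ) (fun k => ?_) k
  simpa only [hv, hx'] using hT (v k) x'

end WeaklyContractive

theorem stmt9_general {E : Type*} [NormedAddCommGroup E]
    (ε δ : ℝ) (hε : ε ∈ Set.Ico (0 : ℝ) 1) (hδ : 0 ≤ δ)
    (T : E → E)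
    (hT : ∀ x y : E, ‖T x - T y‖ ^ 2 ≤ ε ^ 2 * ‖x - y‖ ^ 2 + δ ^ 2)
    (vstar : E) (hfix : T vstar = vstar)
    (v : ℕ → E) (hv : ∀ k, v (k + 1) = T (v k)) :
    (∀ k : ℕ, ‖v k - vstar‖ ^ 2 ≤ ε ^ (2 * k) * ‖v 0 - vstar‖ ^ 2 + δ ^ 2 / (1 - ε ^ 2)) ∧
      Filter.limsup (fun k => ‖v k - vstar‖) Filter.atTop ≤ δ / Real.sqrt (1 - ε ^ 2) := by
  have hε2 : ε ^ 2 < 1 := by nlinarith [hε.1, hε.2]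
  have hdist := WeaklyContractive.norm_sub_fixedPoint_sq_le hT hfix hv hε2
  refine ⟨hdist, ?_⟩
  have hlimsup := limsup_le_sqrt_of_sq_le_pow_mul_add (fun k => norm_nonneg (v k - vstar))
    (sq_nonneg ε) hε2 fun k => by rw [← pow_mul]; exact hdist k
  rwa [Real.sqrt_div (sq_nonneg δ), Real.sqrt_sq hδ] at hlimsup

theorem stmt9 {E : Type*} [NormedAddCommGroup E] [InnerProductSpace ℝ E]
    (ε δ : ℝ) (hε : ε ∈ Set.Ico (0 : ℝ) 1) (hδ : 0 ≤ δ)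
    (T : E → E)
    (hT : ∀ x y : E, ‖T x - T y‖ ^ 2 ≤ ε ^ 2 * ‖x - y‖ ^ 2 + δ ^ 2)
    (vstar : E) (hfix : T vstar = vstar)
    (v : ℕ → E) (hv : ∀ k, v (k + 1) = T (v k)) :
    (∀ k : ℕ, ‖v k - vstar‖ ^ 2 ≤ ε ^ (2 * k) * ‖v 0 - vstar‖ ^ 2 + δ ^ 2 / (1 - ε ^ 2)) ∧
      Filter.limsup (fun k => ‖v k - vstar‖) Filter.atTop ≤ δ / Real.sqrt (1 - ε ^ 2) :=
  stmt9_general ε δ hε hδ T hT vstar hfix v hv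
end

section
/- Let E be the Euclidean space ℝ^d, μ > 0, ρ > 0, and let ℓ : E → ℝ be continuous and μ-strongly convex. Let P : E → E be a proximal map of ℓ/ρ, i.e., for every v ∈ E, P(v) minimizes x ↦ (1/ρ)ℓ(x) + (1/2)‖x − v‖² over E. Let ε ∈ (0,1], δ ≥ 0, and let D : E → E satisfy the (ε, δ)-weakly nonexpansive residual condition. Define T = (1/2)I + (1/2)(2D − I)∘(2P − I), where I is the identity map. Then for all v, w ∈ E: ‖T(v) − T(w)‖² ≤ ε_T²‖v − w‖² + δ_T², where ε_T = (ρ + ρε + με + 2με²)/(ρ + μ + 2με) and δ_T² = (ρ + ρε + με + 2με²)·δ²/(ε(ρ + μ + 2με)). -/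
/-!
With `r v = 2 • P v - v` one has `T v = P v + (D (r v) - r v)`. The objective of the proximal step is
`(1 + μ / ρ)`-strongly convex, and comparing the quadratic growth of the objectives for `v` and `w`
at each other's minimizers gives `(1 + μ / ρ) ‖P v - P w‖² ≤ ⟪P v - P w, v - w⟫`. This yields both
`(ρ + μ) ‖P v - P w‖ ≤ ρ ‖v - w‖` and `‖r v - r w‖² ≤ ‖v - w‖² - 4 (μ / ρ) ‖P v - P w‖²`, so the
residual condition bounds the residual part with a gain proportional to `‖P v - P w‖²`. A weighted
Young inequality for the sum of the two parts then gives the bound.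
-/

open Set Filter Topology
open scoped RealInnerProductSpace

section

variable {E : Type*} [NormedAddCommGroup E] [InnerProductSpace ℝ E] {s : Set E} {f g : E → ℝ}
  {m n : ℝ}

lemma StrongConvexOn.const_mul (hf : StrongConvexOn s m f) {c : ℝ} (hc : 0 ≤ c) :
    StrongConvexOn s (c * m) fun x => c * f x := by
  refine ⟨hf.1, fun x hx y hy a b ha hb hab => ?_⟩
  have h := mul_le_mul_of_nonneg_left (hf.2 hx hy ha hb hab) hc
  simp only [smul_eq_mul] at h ⊢
  linarith

lemma StrongConvexOn.add (hf : StrongConvexOn s m f) (hg : StrongConvexOn s n g) :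
    StrongConvexOn s (m + n) (f + g) :=
  (UniformConvexOn.add hf hg).mono fun r => le_of_eq (by simp only [Pi.add_apply]; ring)

lemma strongConvexOn_half_norm_sub_sq (hs : Convex ℝ s) (v : E) :
    StrongConvexOn s 1 fun x => 1 / 2 * ‖x - v‖ ^ 2 := by
  rw [strongConvexOn_iff_convex]
  have h : (fun x => 1 / 2 * ‖x - v‖ ^ 2 - 1 / (2 : ℝ) * ‖x‖ ^ 2)
      = fun x => 1 / 2 * ‖v‖ ^ 2 - innerₛₗ ℝ v x := by
    ext x
    rw [innerₛₗ_apply_apply, norm_sub_sq_real, real_inner_comm]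
    ring
  rw [h]
  exact (convexOn_const _ hs).sub ((innerₛₗ ℝ v).concaveOn hs)

lemma IsMinOn.add_mul_norm_sub_sq_le (hf : StrongConvexOn s m f) {p x : E}
    (hp : IsMinOn f s p) (hps : p ∈ s) (hx : x ∈ s) :
    f p + m / 2 * ‖x - p‖ ^ 2 ≤ f x := by
  set c := m / 2 * ‖x - p‖ ^ 2 with hc
  have key : ∀ t ∈ Ioo (0 : ℝ) 1, f p + (1 - t) * c ≤ f x := by
    rintro t ⟨ht0, ht1⟩
    have hconv := hf.2 hps hx (sub_nonneg.2 ht1.le) ht0.le (sub_add_cancel 1 t)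
    have hmin : f p ≤ f ((1 - t) • p + t • x) :=
      hp (hf.1 hps hx (sub_nonneg.2 ht1.le) ht0.le (sub_add_cancel 1 t))
    rw [norm_sub_rev] at hconv
    simp only [smul_eq_mul, ← hc] at hconv
    have : t * (f p + (1 - t) * c) ≤ t * f x := by linarith
    exact le_of_mul_le_mul_left this ht0
  have hlim : Tendsto (fun t : ℝ => f p + (1 - t) * c) (𝓝[>] 0) (𝓝 (f p + c)) := by
    refine tendsto_nhdsWithin_of_tendsto_nhds ?_
    exact (by fun_prop : Continuous fun t : ℝ => f p + (1 - t) * c).tendsto' 0 _ (by ring)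
  exact le_of_tendsto hlim (eventually_of_mem (Ioo_mem_nhdsGT one_pos) key)

def IsProxMap (f : E → ℝ) (P : E → E) : Prop :=
  ∀ v, IsMinOn (fun x => f x + 1 / 2 * ‖x - v‖ ^ 2) univ (P v)

lemma norm_sub_sq_add_norm_sub_sq_swap (a b v w : E) :
    ‖b - v‖ ^ 2 + ‖a - w‖ ^ 2 = ‖a - v‖ ^ 2 + ‖b - w‖ ^ 2 + 2 * ⟪a - b, v - w⟫ := by
  simp only [norm_sub_sq_real, inner_sub_left, inner_sub_right]
  ring

lemma IsProxMap.one_add_mul_norm_sub_sq_le_inner {f : E → ℝ} {P : E → E} {m : ℝ}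
    (hP : IsProxMap f P) (hf : StrongConvexOn univ m f) (v w : E) :
    (1 + m) * ‖P v - P w‖ ^ 2 ≤ ⟪P v - P w, v - w⟫ := by
  have growth : ∀ v x, f (P v) + 1 / 2 * ‖P v - v‖ ^ 2 + (m + 1) / 2 * ‖x - P v‖ ^ 2
      ≤ f x + 1 / 2 * ‖x - v‖ ^ 2 := fun v x =>
    (hP v).add_mul_norm_sub_sq_le (hf.add (strongConvexOn_half_norm_sub_sq convex_univ v))
      (mem_univ _) (mem_univ x)
  have hv := growth v (P w)
  have hw := growth w (P v)
  rw [norm_sub_rev (P w)] at hv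
  linarith [norm_sub_sq_add_norm_sub_sq_swap (P v) (P w) v w]

lemma mul_norm_le_of_mul_norm_sq_le_inner {p u : E} {c : ℝ} (h : c * ‖p‖ ^ 2 ≤ ⟪p, u⟫) :
    c * ‖p‖ ≤ ‖u‖ := by
  rcases (norm_nonneg p).eq_or_lt with hp | hp
  · rw [← hp, mul_zero]
    exact norm_nonneg u
  · refine le_of_mul_le_mul_right ?_ hp
    nlinarith [real_inner_le_norm p u]

lemma norm_two_smul_sub_sq_le {p u : E} {m : ℝ} (h : (1 + m) * ‖p‖ ^ 2 ≤ ⟪p, u⟫) :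
    ‖(2 : ℝ) • p - u‖ ^ 2 ≤ ‖u‖ ^ 2 - 4 * m * ‖p‖ ^ 2 := by
  rw [norm_sub_sq_real, norm_smul, real_inner_smul_left, Real.norm_two]
  linarith

end

lemma norm_add_sq_le_one_add_mul {F : Type*} [SeminormedAddCommGroup F] (a b : F) {c : ℝ}
    (hc : 0 < c) : ‖a + b‖ ^ 2 ≤ (1 + c) * ‖a‖ ^ 2 + (1 + c⁻¹) * ‖b‖ ^ 2 := by
  have young : 2 * ‖a‖ * ‖b‖ ≤ c * ‖a‖ ^ 2 + c⁻¹ * ‖b‖ ^ 2 := by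
    have := mul_nonneg (inv_nonneg.2 hc.le) (sq_nonneg (c * ‖a‖ - ‖b‖))
    field_simp at this ⊢
    nlinarith
  calc ‖a + b‖ ^ 2 ≤ (‖a‖ + ‖b‖) ^ 2 := by gcongr; exact norm_add_le a b
    _ ≤ _ := by nlinarith

/-- With `M = ρ + μ + 2 μ ε` and `N = ρ + ε M`, the Young parameter `c = ε M / ρ` is chosen so that
`1 + c = N / ρ` and `1 + c⁻¹ = N / (ε M)`. -/
lemma douglasRachford_young_bound {μ ρ ε δ P R A : ℝ} (hμ : 0 < μ) (hρ : 0 < ρ) (hε : 0 < ε)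
    (hP : 0 ≤ P) (hPA : (1 + μ / ρ) * P ≤ A)
    (hR : R ^ 2 ≤ ε ^ 2 * (A ^ 2 - 4 * (μ / ρ) * P ^ 2) + δ ^ 2) :
    (1 + ε * (ρ + μ + 2 * μ * ε) / ρ) * P ^ 2 + (1 + (ε * (ρ + μ + 2 * μ * ε) / ρ)⁻¹) * R ^ 2
      ≤ ((ρ + ρ * ε + μ * ε + 2 * μ * ε ^ 2) / (ρ + μ + 2 * μ * ε)) ^ 2 * A ^ 2
        + (ρ + ρ * ε + μ * ε + 2 * μ * ε ^ 2) * δ ^ 2 / (ε * (ρ + μ + 2 * μ * ε)) := by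
  set M := ρ + μ + 2 * μ * ε
  set N := ρ + ρ * ε + μ * ε + 2 * μ * ε ^ 2
  have hM : 0 < M := by positivity
  have hNM : N = ρ + ε * M := by ring
  have hPA' : (ρ + μ) * P ≤ ρ * A :=
    calc (ρ + μ) * P = ρ * ((1 + μ / ρ) * P) := by field_simp
      _ ≤ ρ * A := by gcongr
  have hsq : M * (ρ + μ - 2 * μ * ε) * P ^ 2 ≤ ρ ^ 2 * A ^ 2 := by
    nlinarith [mul_self_le_mul_self (by positivity) hPA', sq_nonneg (μ * ε * P)]
  calc (1 + ε * M / ρ) * P ^ 2 + (1 + (ε * M / ρ)⁻¹) * R ^ 2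
      ≤ (1 + ε * M / ρ) * P ^ 2
          + (1 + (ε * M / ρ)⁻¹) * (ε ^ 2 * (A ^ 2 - 4 * (μ / ρ) * P ^ 2) + δ ^ 2) := by
        gcongr
    _ = N / (ρ * M ^ 2) * (M * (ρ + μ - 2 * μ * ε) * P ^ 2) + N * ε / M * A ^ 2
          + N * δ ^ 2 / (ε * M) := by
        rw [hNM]; field_simp; ring
    _ ≤ N / (ρ * M ^ 2) * (ρ ^ 2 * A ^ 2) + N * ε / M * A ^ 2 + N * δ ^ 2 / (ε * M) := by
        gcongr
    _ = (N / M) ^ 2 * A ^ 2 + N * δ ^ 2 / (ε * M) := by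
        rw [hNM]; field_simp

theorem stmt10_general {d : ℕ} (μ ρ : ℝ) (hμ : 0 < μ) (hρ : 0 < ρ)
    (ℓ : EuclideanSpace ℝ (Fin d) → ℝ)
    (hsc : ConvexOn ℝ Set.univ (fun x => ℓ x - (μ / 2) * ‖x‖ ^ 2))
    (P : EuclideanSpace ℝ (Fin d) → EuclideanSpace ℝ (Fin d))
    (hP : ∀ v, IsMinOn (fun x => (1 / ρ) * ℓ x + (1 / 2) * ‖x - v‖ ^ 2) Set.univ (P v))
    (ε δ : ℝ) (hε : ε ∈ Set.Ioc (0 : ℝ) 1)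
    (D : EuclideanSpace ℝ (Fin d) → EuclideanSpace ℝ (Fin d))
    (hD : ResidualCond ε δ D)
    (T : EuclideanSpace ℝ (Fin d) → EuclideanSpace ℝ (Fin d))
    (hT : T = fun v =>
      (1 / 2 : ℝ) • v + (1 / 2 : ℝ) • (2 • D (2 • P v - v) - (2 • P v - v))) :
    ∀ v w : EuclideanSpace ℝ (Fin d),
      ‖T v - T w‖ ^ 2
        ≤ ((ρ + ρ * ε + μ * ε + 2 * μ * ε ^ 2) / (ρ + μ + 2 * μ * ε)) ^ 2 * ‖v - w‖ ^ 2
          + (ρ + ρ * ε + μ * ε + 2 * μ * ε ^ 2) * δ ^ 2 / (ε * (ρ + μ + 2 * μ * ε)) := by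
  intro v w
  obtain ⟨hε0, -⟩ := hε
  have hf : StrongConvexOn univ (μ / ρ) fun x => 1 / ρ * ℓ x := by
    simpa only [one_div_mul_eq_div] using
      (strongConvexOn_iff_convex.2 hsc).const_mul (one_div_nonneg.2 hρ.le)
  have hmono := IsProxMap.one_add_mul_norm_sub_sq_le_inner hP hf v w
  set r : EuclideanSpace ℝ (Fin d) → EuclideanSpace ℝ (Fin d) := fun v => 2 • P v - v
  have hTr : ∀ v, T v = P v + (D (r v) - r v) := fun v => by rw [hT]; module
  have hr : r v - r w = (2 : ℝ) • (P v - P w) - (v - w) := by module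
  have hres := hD (r v) (r w)
  rw [hr] at hres
  calc ‖T v - T w‖ ^ 2 = ‖(P v - P w) + ((D (r v) - r v) - (D (r w) - r w))‖ ^ 2 := by
        rw [hTr, hTr]; abel_nf
    _ ≤ _ := norm_add_sq_le_one_add_mul _ _ (by positivity : 0 < ε * (ρ + μ + 2 * μ * ε) / ρ)
    _ ≤ _ := douglasRachford_young_bound hμ hρ hε0 (norm_nonneg _)
        (mul_norm_le_of_mul_norm_sq_le_inner hmono)
        (hres.trans (by gcongr; exact norm_two_smul_sub_sq_le hmono))

theorem stmt10 {d : ℕ} (μ ρ : ℝ) (hμ : 0 < μ) (hρ : 0 < ρ)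
    (ℓ : EuclideanSpace ℝ (Fin d) → ℝ) (hcont : Continuous ℓ)
    (hsc : ConvexOn ℝ Set.univ (fun x => ℓ x - (μ / 2) * ‖x‖ ^ 2))
    (P : EuclideanSpace ℝ (Fin d) → EuclideanSpace ℝ (Fin d))
    (hP : ∀ v, IsMinOn (fun x => (1 / ρ) * ℓ x + (1 / 2) * ‖x - v‖ ^ 2) Set.univ (P v))
    (ε δ : ℝ) (hε : ε ∈ Set.Ioc (0 : ℝ) 1) (hδ : 0 ≤ δ)
    (D : EuclideanSpace ℝ (Fin d) → EuclideanSpace ℝ (Fin d))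
    (hD : ResidualCond ε δ D)
    (T : EuclideanSpace ℝ (Fin d) → EuclideanSpace ℝ (Fin d))
    (hT : T = fun v =>
      (1 / 2 : ℝ) • v + (1 / 2 : ℝ) • (2 • D (2 • P v - v) - (2 • P v - v))) :
    ∀ v w : EuclideanSpace ℝ (Fin d),
      ‖T v - T w‖ ^ 2
        ≤ ((ρ + ρ * ε + μ * ε + 2 * μ * ε ^ 2) / (ρ + μ + 2 * μ * ε)) ^ 2 * ‖v - w‖ ^ 2
          + (ρ + ρ * ε + μ * ε + 2 * μ * ε ^ 2) * δ ^ 2 / (ε * (ρ + μ + 2 * μ * ε)) :=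
  stmt10_general μ ρ hμ hρ ℓ hsc P hP ε δ hε D hD T hT
end

section
/- Let E be the Euclidean space ℝ^d (or a real Hilbert space), μ > 0, ρ > 0, and let ℓ : E → ℝ be continuous and μ-strongly convex. Let P : E → E be a proximal map of ℓ/ρ. Then the map N = −(2P − I) is ρ/(ρ+μ)-averaged; equivalently, for all v, w ∈ E: ‖N(v) − N(w)‖² ≤ ‖v − w‖² − (μ/ρ)·‖(v − N(v)) − (w − N(w))‖². -/
/-! The proximal objective `x ↦ ℓ x / ρ + ‖x - v‖² / 2` is `(1 + μ/ρ)`-strongly convex, so it grows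
quadratically away from its minimizer `P v`. Comparing the objectives for `v` and `w` at `P v` and
`P w` gives `(1 + μ/ρ) ‖P v - P w‖² ≤ ⟪P v - P w, v - w⟫`. Expanding squares, this yields both the
inequality for `N = I - 2P` and the nonexpansiveness of `R = I - 2(1 + μ/ρ)P`, and
`N = θ R + (1 - θ) I` with `θ = (1 + μ/ρ)⁻¹ = ρ / (ρ + μ)`. -/

open Set Filter Topology

section

variable {E : Type*} [NormedAddCommGroup E] [InnerProductSpace ℝ E]

theorem IsMinOn.add_sq_norm_sub_le_of_strongConvexOn {s : Set E} {f : E → ℝ} {m : ℝ}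
    {x₀ x : E} (hf : StrongConvexOn s m f) (hmin : IsMinOn f s x₀) (hx₀ : x₀ ∈ s) (hx : x ∈ s) :
    f x₀ + m / 2 * ‖x - x₀‖ ^ 2 ≤ f x := by
  have hseg : ∀ t ∈ Ioo (0 : ℝ) 1, f x₀ + (1 - t) * (m / 2 * ‖x - x₀‖ ^ 2) ≤ f x := by
    rintro t ⟨ht₀, ht₁⟩
    have hconv := hf.2 hx₀ hx (sub_nonneg.2 ht₁.le) ht₀.le (sub_add_cancel 1 t)
    have hle : f x₀ ≤ f ((1 - t) • x₀ + t • x) :=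
      hmin (hf.1 hx₀ hx (sub_nonneg.2 ht₁.le) ht₀.le (sub_add_cancel 1 t))
    rw [norm_sub_rev] at hconv
    simp only [smul_eq_mul] at hconv
    refine le_of_mul_le_mul_left ?_ ht₀
    linear_combination hle + hconv
  have hlim : Tendsto (fun t : ℝ => f x₀ + (1 - t) * (m / 2 * ‖x - x₀‖ ^ 2)) (𝓝[>] 0)
      (𝓝 (f x₀ + m / 2 * ‖x - x₀‖ ^ 2)) :=
    (Continuous.tendsto' (by fun_prop) 0 _ (by simp)).mono_left nhdsWithin_le_nhds
  exact le_of_tendsto hlim (eventually_of_mem (Ioo_mem_nhdsGT one_pos) hseg)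

theorem strongConvexOn_add_half_sq_norm_sub {g : E → ℝ} {c : ℝ}
    (hg : ConvexOn ℝ univ fun x => g x - c / 2 * ‖x‖ ^ 2) (v : E) :
    StrongConvexOn univ (1 + c) fun x => g x + 1 / 2 * ‖x - v‖ ^ 2 := by
  rw [strongConvexOn_iff_convex]
  have hsplit : (fun x => g x + 1 / 2 * ‖x - v‖ ^ 2 - (1 + c) / 2 * ‖x‖ ^ 2)
      = fun x => (g x - c / 2 * ‖x‖ ^ 2 + (-innerₛₗ ℝ v) x) + 1 / 2 * ‖v‖ ^ 2 := by
    ext x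
    simp only [LinearMap.neg_apply, innerₛₗ_apply_apply, norm_sub_sq_real, real_inner_comm x v]
    ring
  rw [hsplit]
  exact (hg.add ((-innerₛₗ ℝ v).convexOn convex_univ)).add_const _

theorem strongly_monotone_of_isMinOn_add_half_sq_norm_sub {g : E → ℝ} {c : ℝ}
    (hg : ConvexOn ℝ univ fun x => g x - c / 2 * ‖x‖ ^ 2) {P : E → E}
    (hP : ∀ v, IsMinOn (fun x => g x + 1 / 2 * ‖x - v‖ ^ 2) univ (P v)) (v w : E) :
    (1 + c) * ‖P v - P w‖ ^ 2 ≤ inner ℝ (P v - P w) (v - w) := by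
  have hv := (hP v).add_sq_norm_sub_le_of_strongConvexOn
    (strongConvexOn_add_half_sq_norm_sub hg v) (mem_univ _) (mem_univ (P w))
  have hw := (hP w).add_sq_norm_sub_le_of_strongConvexOn
    (strongConvexOn_add_half_sq_norm_sub hg w) (mem_univ _) (mem_univ (P v))
  have hpar : ‖P w - v‖ ^ 2 - ‖P v - v‖ ^ 2 + ‖P v - w‖ ^ 2 - ‖P w - w‖ ^ 2
      = 2 * inner ℝ (P v - P w) (v - w) := by
    simp only [norm_sub_sq_real, inner_sub_left, inner_sub_right, real_inner_comm]
    ring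
  rw [norm_sub_rev (P w)] at hv
  linarith

variable {T : E → E} {c : ℝ}

theorem norm_sub_sq_le_of_strongly_monotone
    (hT : ∀ v w, (1 + c) * ‖T v - T w‖ ^ 2 ≤ inner ℝ (T v - T w) (v - w))
    {N : E → E} (hN : ∀ v, N v = v - (2 : ℝ) • T v) (v w : E) :
    ‖N v - N w‖ ^ 2 ≤ ‖v - w‖ ^ 2 - c * ‖(v - N v) - (w - N w)‖ ^ 2 := by
  have hdiff : N v - N w = (v - w) - (2 : ℝ) • (T v - T w) := by
    rw [hN, hN]; module
  have hres : (v - N v) - (w - N w) = (2 : ℝ) • (T v - T w) := by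
    rw [hN, hN]; module
  rw [hdiff, hres, norm_sub_sq_real, norm_smul, inner_smul_right, real_inner_comm]
  norm_num
  nlinarith [hT v w]

theorem norm_sub_smul_sub_le_of_strongly_monotone (hc : 0 ≤ 1 + c)
    (hT : ∀ v w, (1 + c) * ‖T v - T w‖ ^ 2 ≤ inner ℝ (T v - T w) (v - w)) (v w : E) :
    ‖(v - (2 * (1 + c)) • T v) - (w - (2 * (1 + c)) • T w)‖ ≤ ‖v - w‖ := by
  have hdiff : (v - (2 * (1 + c)) • T v) - (w - (2 * (1 + c)) • T w)
      = (v - w) - (2 * (1 + c)) • (T v - T w) := by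
    module
  rw [← sq_le_sq₀ (norm_nonneg _) (norm_nonneg _), hdiff, norm_sub_sq_real, norm_smul,
    inner_smul_right, real_inner_comm, Real.norm_of_nonneg (by positivity)]
  nlinarith [mul_le_mul_of_nonneg_left (hT v w) hc]

theorem sub_two_smul_eq_smul_add_smul {κ : ℝ} (hκ : κ ≠ 0) (x y : E) :
    x - (2 : ℝ) • y = κ⁻¹ • (x - (2 * κ) • y) + (1 - κ⁻¹) • x := by
  match_scalars <;> field_simp
  ring

end

theorem stmt11_general {d : ℕ} (μ ρ : ℝ) (hμ : 0 < μ) (hρ : 0 < ρ)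
    (ℓ : EuclideanSpace ℝ (Fin d) → ℝ)
    (hsc : ConvexOn ℝ Set.univ (fun x => ℓ x - (μ / 2) * ‖x‖ ^ 2))
    (P : EuclideanSpace ℝ (Fin d) → EuclideanSpace ℝ (Fin d))
    (hP : ∀ v, IsMinOn (fun x => (1 / ρ) * ℓ x + (1 / 2) * ‖x - v‖ ^ 2) Set.univ (P v))
    (N : EuclideanSpace ℝ (Fin d) → EuclideanSpace ℝ (Fin d))
    (hN : N = fun v => -(2 • P v - v)) :
    (∃ R : EuclideanSpace ℝ (Fin d) → EuclideanSpace ℝ (Fin d),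
        (∀ x y, ‖R x - R y‖ ≤ ‖x - y‖) ∧
        N = fun v => (ρ / (ρ + μ)) • R v + (1 - ρ / (ρ + μ)) • v) ∧
      ∀ v w : EuclideanSpace ℝ (Fin d),
        ‖N v - N w‖ ^ 2
          ≤ ‖v - w‖ ^ 2 - (μ / ρ) * ‖(v - N v) - (w - N w)‖ ^ 2 := by
  have hg : ConvexOn ℝ univ fun x => 1 / ρ * ℓ x - μ / ρ / 2 * ‖x‖ ^ 2 := by
    refine (hsc.smul (one_div_nonneg.2 hρ.le)).congr fun x _ => ?_
    simp only [smul_eq_mul]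
    ring
  have hP_mono :=
    strongly_monotone_of_isMinOn_add_half_sq_norm_sub (g := fun x => 1 / ρ * ℓ x) hg hP
  have hN_apply : ∀ v, N v = v - (2 : ℝ) • P v := by
    intro v
    rw [hN]
    module
  have hθ : ρ / (ρ + μ) = (1 + μ / ρ)⁻¹ := by
    field_simp
  refine ⟨⟨fun v => v - (2 * (1 + μ / ρ)) • P v,
    norm_sub_smul_sub_le_of_strongly_monotone (by positivity) hP_mono, ?_⟩,
    norm_sub_sq_le_of_strongly_monotone hP_mono hN_apply⟩
  funext v
  rw [hN_apply, hθ]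
  exact sub_two_smul_eq_smul_add_smul (by positivity) v (P v)

theorem stmt11 {d : ℕ} (μ ρ : ℝ) (hμ : 0 < μ) (hρ : 0 < ρ)
    (ℓ : EuclideanSpace ℝ (Fin d) → ℝ) (hcont : Continuous ℓ)
    (hsc : ConvexOn ℝ Set.univ (fun x => ℓ x - (μ / 2) * ‖x‖ ^ 2))
    (P : EuclideanSpace ℝ (Fin d) → EuclideanSpace ℝ (Fin d))
    (hP : ∀ v, IsMinOn (fun x => (1 / ρ) * ℓ x + (1 / 2) * ‖x - v‖ ^ 2) Set.univ (P v))
    (N : EuclideanSpace ℝ (Fin d) → EuclideanSpace ℝ (Fin d))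
    (hN : N = fun v => -(2 • P v - v)) :
    (∃ R : EuclideanSpace ℝ (Fin d) → EuclideanSpace ℝ (Fin d),
        (∀ x y, ‖R x - R y‖ ≤ ‖x - y‖) ∧
        N = fun v => (ρ / (ρ + μ)) • R v + (1 - ρ / (ρ + μ)) • v) ∧
      ∀ v w : EuclideanSpace ℝ (Fin d),
        ‖N v - N w‖ ^ 2
          ≤ ‖v - w‖ ^ 2 - (μ / ρ) * ‖(v - N v) - (w - N w)‖ ^ 2 :=
  stmt11_general μ ρ hμ hρ ℓ hsc P hP N hN
end

section
/- Let (β_k)_{k≥0} be a sequence of nonnegative real numbers, let (a_k)_{k≥0} be a sequence of nonnegative real numbers with a_k → 0, and let η ∈ [0,1). Suppose that for every k, at least one of the following holds: β_{k+1} ≤ a_k, or β_{k+1} ≤ η·β_k. Then β_k → 0 as k → ∞. -/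
open Filter Topology

-- The bound `max c _` survives a contraction step because `η * c ≤ c`.
theorem le_max_pow_mul_of_step {β a : ℕ → ℝ} {η c : ℝ} (hη₀ : 0 ≤ η) (hη₁ : η ≤ 1)
    (hc : 0 ≤ c) {N : ℕ} (ha : ∀ k ≥ N, a k ≤ c)
    (hstep : ∀ k, β (k + 1) ≤ a k ∨ β (k + 1) ≤ η * β k) (n : ℕ) :
    β (N + n) ≤ max c (η ^ n * β N) := by
  induction n with
  | zero => simp
  | succ n ih =>
    rcases hstep (N + n) with hle | hle
    · exact le_max_of_le_left (hle.trans (ha _ (Nat.le_add_right N n)))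
    · calc β (N + (n + 1)) ≤ η * β (N + n) := hle
        _ ≤ η * max c (η ^ n * β N) := mul_le_mul_of_nonneg_left ih hη₀
        _ = max (η * c) (η ^ (n + 1) * β N) := by
          rw [mul_max_of_nonneg _ _ hη₀, pow_succ', mul_assoc]
        _ ≤ max c (η ^ (n + 1) * β N) :=
          max_le_max_right _ (mul_le_of_le_one_left hc hη₁)

theorem eventually_lt_of_step {β a : ℕ → ℝ} {η c u : ℝ} (hη₀ : 0 ≤ η) (hη₁ : η < 1)
    (hstep : ∀ k, β (k + 1) ≤ a k ∨ β (k + 1) ≤ η * β k)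
    (hc : 0 ≤ c) (hcu : c < u) (ha : ∀ᶠ k in atTop, a k ≤ c) :
    ∀ᶠ k in atTop, β k < u := by
  obtain ⟨N, hN⟩ := eventually_atTop.1 ha
  have hpow : Tendsto (fun n ↦ η ^ n * β N) atTop (𝓝 0) := by
    simpa using (tendsto_pow_atTop_nhds_zero_of_lt_one hη₀ hη₁).mul_const (β N)
  obtain ⟨M, hM⟩ := eventually_atTop.1 (hpow.eventually (gt_mem_nhds (hc.trans_lt hcu)))
  refine eventually_atTop.2 ⟨N + M, fun k hk ↦ ?_⟩
  obtain ⟨n, rfl⟩ := Nat.exists_eq_add_of_le (le_of_add_le_left hk)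
  exact (le_max_pow_mul_of_step hη₀ hη₁.le hc hN hstep n).trans_lt
    (max_lt hcu (hM n (by omega)))

theorem stmt17_general (β a : ℕ → ℝ) (hβ : ∀ k, 0 ≤ β k)
    (halim : Filter.Tendsto a Filter.atTop (nhds 0))
    (η : ℝ) (hη : η ∈ Set.Ico (0 : ℝ) 1)
    (hstep : ∀ k, β (k + 1) ≤ a k ∨ β (k + 1) ≤ η * β k) :
    Filter.Tendsto β Filter.atTop (nhds 0) := by
  refine tendsto_order.2 ⟨fun l hl ↦ .of_forall fun k ↦ hl.trans_le (hβ k), fun u hu ↦ ?_⟩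
  exact eventually_lt_of_step hη.1 hη.2 hstep (half_pos hu).le (half_lt_self hu)
    (halim.eventually (ge_mem_nhds (half_pos hu)))

theorem stmt17 (β a : ℕ → ℝ) (hβ : ∀ k, 0 ≤ β k) (ha : ∀ k, 0 ≤ a k)
    (halim : Filter.Tendsto a Filter.atTop (nhds 0))
    (η : ℝ) (hη : η ∈ Set.Ico (0 : ℝ) 1)
    (hstep : ∀ k, β (k + 1) ≤ a k ∨ β (k + 1) ≤ η * β k) :
    Filter.Tendsto β Filter.atTop (nhds 0) :=
  stmt17_general β a hβ halim η hη hstep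
end

section
/- Let E = ℝ^d, μ > 0, ρ > 0, and let ℓ : E → ℝ be continuous and μ-strongly convex, with P : E → E a proximal map of ℓ/ρ. Let ε ∈ (0,1) and δ ≥ 0, let D : E → E satisfy the (ε, δ)-weakly nonexpansive residual condition, and assume ε/(μ(1 + ε − 2ε²)) < 1/ρ. Define T = (1/2)I + (1/2)(2D − I)∘(2P − I), ε_T = (ρ + ρε + με + 2με²)/(ρ + μ + 2με) and δ_T² = (ρ + ρε + με + 2με²)·δ²/(ε(ρ + μ + 2με)). Assume T has a fixed point v* ∈ E, and consider the iteration v⁽ᵏ⁺¹⁾ = T(v⁽ᵏ⁾) with x⁽ᵏ⁾ = P(v⁽ᵏ⁾) and x* = P(v*). Then ε_T < 1, and for every r' > δ_T/√(1 − ε_T²) there exists K such that for all k ≥ K: ‖v⁽ᵏ⁾ − v*‖ ≤ r' and ‖x⁽ᵏ⁾ − x*‖ ≤ (ρ/(ρ+μ))·r'; i.e., the ADMM-PnP iterates converge into a ball of radius δ_T/√(1 − ε_T²) (respectively (ρ/(ρ+μ))·δ_T/√(1 − ε_T²) for the primal iterates) around the fixed point. -/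
open Filter Topology Set
open scoped RealInnerProductSpace

theorem StrongConvexOn.add_sq_norm_sub_le_of_isMinOn {E : Type*} [NormedAddCommGroup E]
    [NormedSpace ℝ E] {s : Set E} {m : ℝ} {f : E → ℝ} (hf : StrongConvexOn s m f) {p x : E}
    (hp : p ∈ s) (hx : x ∈ s) (hmin : IsMinOn f s p) :
    f p + m / 2 * ‖x - p‖ ^ 2 ≤ f x := by
  have hlim : Tendsto (fun t : ℝ => f p + (1 - t) * (m / 2 * ‖x - p‖ ^ 2)) (𝓝[>] 0)
      (𝓝 (f p + m / 2 * ‖x - p‖ ^ 2)) := by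
    have : Continuous fun t : ℝ => f p + (1 - t) * (m / 2 * ‖x - p‖ ^ 2) := by fun_prop
    simpa using this.continuousWithinAt (s := Ioi 0) (x := 0) |>.tendsto
  refine le_of_tendsto hlim ?_
  filter_upwards [Ioo_mem_nhdsGT zero_lt_one] with t ⟨ht0, ht1⟩
  -- compare `f p` with `f ((1 - t) • p + t • x)`, then divide by `t` and let `t → 0`
  have hconv := hf.2 hp hx (sub_nonneg.2 ht1.le) ht0.le (sub_add_cancel 1 t)
  have hle := isMinOn_iff.1 hmin _ (hf.1 hp hx (sub_nonneg.2 ht1.le) ht0.le (sub_add_cancel 1 t))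
  simp only [smul_eq_mul, norm_sub_rev p x] at hconv
  have : t * (f p + (1 - t) * (m / 2 * ‖x - p‖ ^ 2)) ≤ t * f x := by linarith
  exact le_of_mul_le_mul_left this ht0

section InnerProductSpace

variable {E : Type*} [NormedAddCommGroup E] [InnerProductSpace ℝ E]

theorem strongConvexOn_prox_objective {ℓ : E → ℝ} {μ ρ : ℝ} (hρ : 0 < ρ)
    (hℓ : ConvexOn ℝ univ fun x => ℓ x - μ / 2 * ‖x‖ ^ 2) (v : E) :
    StrongConvexOn univ (1 + μ / ρ) fun x => 1 / ρ * ℓ x + 1 / 2 * ‖x - v‖ ^ 2 := by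
  rw [strongConvexOn_iff_convex]
  have hlin := ((innerSL ℝ (-v)).toLinearMap.convexOn convex_univ).add_const (1 / 2 * ‖v‖ ^ 2)
  refine ((hℓ.smul (one_div_nonneg.2 hρ.le)).add hlin).congr fun x _ => ?_
  simp only [Pi.add_apply, smul_eq_mul, ContinuousLinearMap.coe_coe, innerSL_apply_apply,
    inner_neg_left, norm_sub_sq_real, real_inner_comm v x]
  field_simp
  ring

theorem sq_norm_prox_sub_le_inner {ℓ : E → ℝ} {μ ρ : ℝ} (hρ : 0 < ρ)
    (hℓ : ConvexOn ℝ univ fun x => ℓ x - μ / 2 * ‖x‖ ^ 2) {P : E → E}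
    (hP : ∀ v, IsMinOn (fun x => 1 / ρ * ℓ x + 1 / 2 * ‖x - v‖ ^ 2) univ (P v)) (a b : E) :
    (ρ + μ) * ‖P a - P b‖ ^ 2 ≤ ρ * ⟪a - b, P a - P b⟫ := by
  have ha := (strongConvexOn_prox_objective hρ hℓ a).add_sq_norm_sub_le_of_isMinOn
    (mem_univ _) (mem_univ (P b)) (hP a)
  have hb := (strongConvexOn_prox_objective hρ hℓ b).add_sq_norm_sub_le_of_isMinOn
    (mem_univ _) (mem_univ (P a)) (hP b)
  have hpolar : ‖P b - a‖ ^ 2 - ‖P a - a‖ ^ 2 + ‖P a - b‖ ^ 2 - ‖P b - b‖ ^ 2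
      = 2 * ⟪a - b, P a - P b⟫ := by
    simp only [norm_sub_sq_real, inner_sub_left, inner_sub_right, real_inner_comm]
    ring
  rw [norm_sub_rev (P b)] at ha
  have hmono : (1 + μ / ρ) * ‖P a - P b‖ ^ 2 ≤ ⟪a - b, P a - P b⟫ := by linarith
  calc (ρ + μ) * ‖P a - P b‖ ^ 2 = ρ * ((1 + μ / ρ) * ‖P a - P b‖ ^ 2) := by field_simp
    _ ≤ ρ * ⟪a - b, P a - P b⟫ := by gcongr

theorem mul_norm_le_of_mul_sq_norm_le_inner {a b : ℝ} {z w : E} (hb : 0 ≤ b)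
    (h : a * ‖w‖ ^ 2 ≤ b * ⟪z, w⟫) : a * ‖w‖ ≤ b * ‖z‖ := by
  rcases (norm_nonneg w).eq_or_lt with hw | hw
  · rw [← hw, mul_zero]
    positivity
  refine le_of_mul_le_mul_right ?_ hw
  calc a * ‖w‖ * ‖w‖ = a * ‖w‖ ^ 2 := by ring
    _ ≤ b * ⟪z, w⟫ := h
    _ ≤ b * (‖z‖ * ‖w‖) := by gcongr; exact real_inner_le_norm z w
    _ = b * ‖z‖ * ‖w‖ := by ring

theorem sq_norm_two_smul_sub_le {μ ρ : ℝ} {z w : E} (h : (ρ + μ) * ‖w‖ ^ 2 ≤ ρ * ⟪z, w⟫) :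
    ρ * ‖(2 : ℝ) • w - z‖ ^ 2 ≤ ρ * ‖z‖ ^ 2 - 4 * μ * ‖w‖ ^ 2 := by
  rw [norm_sub_sq_real, norm_smul, real_inner_smul_left, real_inner_comm]
  norm_num
  linarith

theorem norm_add_sq_le_one_add_mul_s19 {t : ℝ} (ht : 0 < t) (x y : E) :
    ‖x + y‖ ^ 2 ≤ (1 + t) * ‖x‖ ^ 2 + (1 + 1 / t) * ‖y‖ ^ 2 := by
  have hamgm : 2 * ‖x‖ * ‖y‖ ≤ t * ‖x‖ ^ 2 + 1 / t * ‖y‖ ^ 2 := by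
    have : t * ‖x‖ ^ 2 + 1 / t * ‖y‖ ^ 2 - 2 * ‖x‖ * ‖y‖ = (t * ‖x‖ - ‖y‖) ^ 2 / t := by
      field_simp
      ring
    linarith [show 0 ≤ (t * ‖x‖ - ‖y‖) ^ 2 / t by positivity]
  rw [norm_add_sq_real]
  nlinarith [real_inner_le_norm x y]

noncomputable def douglasRachford (P D : E → E) (v : E) : E :=
  (1 / 2 : ℝ) • v + (1 / 2 : ℝ) • (2 • D (2 • P v - v) - (2 • P v - v))

theorem douglasRachford_apply (P D : E → E) (v : E) :
    douglasRachford P D v = P v + (D (2 • P v - v) - (2 • P v - v)) := by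
  unfold douglasRachford
  module

noncomputable def douglasRachfordRate (μ ρ ε : ℝ) : ℝ :=
  (ρ + ρ * ε + μ * ε + 2 * μ * ε ^ 2) / (ρ + μ + 2 * μ * ε)

theorem douglasRachfordRate_lt_one {μ ρ ε : ℝ} (hμ : 0 < μ) (hρ : 0 < ρ) (hε : ε ∈ Ioo 0 1)
    (h : ε / (μ * (1 + ε - 2 * ε ^ 2)) < 1 / ρ) : douglasRachfordRate μ ρ ε < 1 := by
  obtain ⟨hε0, hε1⟩ := hε
  have hquad : 0 < 1 + ε - 2 * ε ^ 2 := by nlinarith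
  rw [div_lt_div_iff₀ (by positivity) hρ] at h
  rw [douglasRachfordRate, div_lt_one (by positivity)]
  nlinarith

-- The Young weight `t = ε (ρ + μ + 2 μ ε) / ρ` makes `1 + t` and `1 + 1/t` multiples of the
-- numerator `N` of the rate: `1 + t = N / ρ` and `1 + 1/t = N / (ε (ρ + μ + 2 μ ε))`.
theorem douglasRachfordRate_young_bound {μ ρ ε δ W U R s : ℝ} (hμ : 0 ≤ μ) (hρ : 0 < ρ)
    (hε : 0 < ε) (hW : 0 ≤ W) (hWs : (ρ + μ) ^ 2 * W ≤ ρ ^ 2 * s)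
    (hUs : ρ * U ≤ ρ * s - 4 * μ * W) (hRU : R ≤ ε ^ 2 * U + δ ^ 2) :
    (1 + ε * (ρ + μ + 2 * μ * ε) / ρ) * W + (1 + 1 / (ε * (ρ + μ + 2 * μ * ε) / ρ)) * R
      ≤ douglasRachfordRate μ ρ ε ^ 2 * s + douglasRachfordRate μ ρ ε * δ ^ 2 / ε := by
  rw [douglasRachfordRate]
  set den := ρ + μ + 2 * μ * ε
  set N := ρ + ρ * ε + μ * ε + 2 * μ * ε ^ 2
  have hden : 0 < den := by positivity
  have hN : 0 < N := by positivity
  -- `ρ N s` minus the left side is `hWs + ε den • hUs` plus `4 μ² ε² W`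
  have hcore : den ^ 2 * W + ρ * ε * den * U ≤ ρ * N * s := by
    nlinarith [mul_le_mul_of_nonneg_left hUs (by positivity : 0 ≤ ε * den),
      mul_nonneg (by positivity : 0 ≤ 4 * μ ^ 2 * ε ^ 2) hW]
  calc _ ≤ (1 + ε * den / ρ) * W + (1 + 1 / (ε * den / ρ)) * (ε ^ 2 * U + δ ^ 2) := by gcongr
    _ = N / (ρ * den ^ 2) * (den ^ 2 * W + ρ * ε * den * U) + N / den * δ ^ 2 / ε := by
        field_simp
        ring
    _ ≤ N / (ρ * den ^ 2) * (ρ * N * s) + N / den * δ ^ 2 / ε := by gcongr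
    _ = (N / den) ^ 2 * s + N / den * δ ^ 2 / ε := by field_simp

theorem douglasRachford_contraction {μ ρ ε δ : ℝ} (hμ : 0 ≤ μ) (hρ : 0 < ρ) (hε : 0 < ε)
    {P D : E → E}
    (hP : ∀ a b, (ρ + μ) * ‖P a - P b‖ ^ 2 ≤ ρ * ⟪a - b, P a - P b⟫) (hD : ResidualCond ε δ D)
    (u v : E) :
    ‖douglasRachford P D u - douglasRachford P D v‖ ^ 2
      ≤ douglasRachfordRate μ ρ ε ^ 2 * ‖u - v‖ ^ 2 + douglasRachfordRate μ ρ ε * δ ^ 2 / ε := by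
  have hdiff : douglasRachford P D u - douglasRachford P D v
      = (P u - P v) + ((D (2 • P u - u) - (2 • P u - u)) - (D (2 • P v - v) - (2 • P v - v))) := by
    rw [douglasRachford_apply, douglasRachford_apply]
    abel
  have hrefl : (2 • P u - u) - (2 • P v - v) = (2 : ℝ) • (P u - P v) - (u - v) := by module
  have hW : (ρ + μ) ^ 2 * ‖P u - P v‖ ^ 2 ≤ ρ ^ 2 * ‖u - v‖ ^ 2 := by
    rw [← mul_pow, ← mul_pow]
    exact pow_le_pow_left₀ (by positivity)
      (mul_norm_le_of_mul_sq_norm_le_inner hρ.le (hP u v)) 2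
  have hR := hD (2 • P u - u) (2 • P v - v)
  rw [hrefl] at hR
  rw [hdiff]
  exact (norm_add_sq_le_one_add_mul_s19 (by positivity) _ _).trans
    (douglasRachfordRate_young_bound hμ hρ hε (sq_nonneg _) hW
      (sq_norm_two_smul_sub_le (hP u v)) hR)

end InnerProductSpace

theorem eventually_lt_of_le_mul_add {a : ℕ → ℝ} {q b c : ℝ} (hq0 : 0 ≤ q) (hq1 : q < 1)
    (h : ∀ k, a (k + 1) ≤ q * a k + b) (hc : b / (1 - q) < c) : ∀ᶠ k in atTop, a k < c := by
  set L := b / (1 - q)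
  have hL : q * L + b = L := by
    simp only [L]
    field_simp [(sub_pos.2 hq1).ne']
    ring
  have hgeom : ∀ k, a k - L ≤ q ^ k * (a 0 - L) := by
    intro k
    induction k with
    | zero => simp
    | succ k ih =>
      calc a (k + 1) - L ≤ q * (a k - L) := by linarith [h k]
        _ ≤ q * (q ^ k * (a 0 - L)) := by gcongr
        _ = q ^ (k + 1) * (a 0 - L) := by ring
  have hlim : Tendsto (fun k => q ^ k * (a 0 - L)) atTop (𝓝 0) := by
    simpa using (tendsto_pow_atTop_nhds_zero_of_lt_one hq0 hq1).mul_const (a 0 - L)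
  filter_upwards [hlim.eventually_lt_const (sub_pos.2 hc)] with k hk
  linarith [hgeom k]

theorem stmt19_general {d : ℕ} (μ ρ : ℝ) (hμ : 0 < μ) (hρ : 0 < ρ)
    (ℓ : EuclideanSpace ℝ (Fin d) → ℝ)
    (hsc : ConvexOn ℝ Set.univ (fun x => ℓ x - (μ / 2) * ‖x‖ ^ 2))
    (P : EuclideanSpace ℝ (Fin d) → EuclideanSpace ℝ (Fin d))
    (hP : ∀ v, IsMinOn (fun x => (1 / ρ) * ℓ x + (1 / 2) * ‖x - v‖ ^ 2) Set.univ (P v))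
    (ε δ : ℝ) (hε : ε ∈ Set.Ioo (0 : ℝ) 1)
    (D : EuclideanSpace ℝ (Fin d) → EuclideanSpace ℝ (Fin d))
    (hD : ResidualCond ε δ D)
    (hstep : ε / (μ * (1 + ε - 2 * ε ^ 2)) < 1 / ρ)
    (T : EuclideanSpace ℝ (Fin d) → EuclideanSpace ℝ (Fin d))
    (hT : T = fun v =>
      (1 / 2 : ℝ) • v + (1 / 2 : ℝ) • (2 • D (2 • P v - v) - (2 • P v - v)))
    (εT δT2 : ℝ)
    (hεT : εT = (ρ + ρ * ε + μ * ε + 2 * μ * ε ^ 2) / (ρ + μ + 2 * μ * ε))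
    (hδT2 : δT2 = (ρ + ρ * ε + μ * ε + 2 * μ * ε ^ 2) * δ ^ 2 / (ε * (ρ + μ + 2 * μ * ε)))
    (vstar : EuclideanSpace ℝ (Fin d)) (hfix : T vstar = vstar)
    (v x : ℕ → EuclideanSpace ℝ (Fin d))
    (hv : ∀ k, v (k + 1) = T (v k))
    (hx : ∀ k, x k = P (v k))
    (xstar : EuclideanSpace ℝ (Fin d)) (hxstar : xstar = P vstar) :
    εT < 1 ∧
      ∀ r' : ℝ, Real.sqrt δT2 / Real.sqrt (1 - εT ^ 2) < r' →
        ∃ K : ℕ, ∀ k ≥ K,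
          ‖v k - vstar‖ ≤ r' ∧ ‖x k - xstar‖ ≤ (ρ / (ρ + μ)) * r' := by
  have hε0 := hε.1
  replace hεT : εT = douglasRachfordRate μ ρ ε := hεT
  replace hδT2 : δT2 = εT * δ ^ 2 / ε := by
    rw [hδT2, hεT, douglasRachfordRate]
    field_simp
  have hεT1 : εT < 1 := hεT ▸ douglasRachfordRate_lt_one hμ hρ hε hstep
  have hεT0 : 0 ≤ εT := by rw [hεT, douglasRachfordRate]; positivity
  have hεT2 : εT ^ 2 < 1 := by nlinarith
  have hmono := sq_norm_prox_sub_le_inner hρ hsc hP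
  have hrec (k : ℕ) : ‖v (k + 1) - vstar‖ ^ 2 ≤ εT ^ 2 * ‖v k - vstar‖ ^ 2 + δT2 := by
    have hTdr : T = douglasRachford P D := hT
    calc ‖v (k + 1) - vstar‖ ^ 2 = ‖T (v k) - T vstar‖ ^ 2 := by rw [hv k, hfix]
      _ ≤ εT ^ 2 * ‖v k - vstar‖ ^ 2 + δT2 := by
        rw [hTdr, hεT, hδT2, hεT]
        exact douglasRachford_contraction hμ.le hρ hε0 hmono hD _ _
  refine ⟨hεT1, fun r' hr' => ?_⟩
  have hr'0 : 0 < r' := lt_of_le_of_lt (by positivity) hr'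
  have hball : δT2 / (1 - εT ^ 2) < r' ^ 2 := by
    rwa [← Real.sqrt_div' _ (by linarith), Real.sqrt_lt' hr'0] at hr'
  obtain ⟨K, hK⟩ := eventually_atTop.1 <|
    eventually_lt_of_le_mul_add (a := fun k => ‖v k - vstar‖ ^ 2) (sq_nonneg εT) hεT2 hrec hball
  refine ⟨K, fun k hk => ?_⟩
  have hvk : ‖v k - vstar‖ ≤ r' := le_of_sq_le_sq (hK k hk).le hr'0.le
  refine ⟨hvk, ?_⟩
  have hPk := mul_norm_le_of_mul_sq_norm_le_inner hρ.le (hmono (v k) vstar)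
  rw [hx, hxstar, div_mul_eq_mul_div, le_div_iff₀ (by positivity)]
  linarith [mul_le_mul_of_nonneg_left hvk hρ.le]

theorem stmt19 {d : ℕ} (μ ρ : ℝ) (hμ : 0 < μ) (hρ : 0 < ρ)
    (ℓ : EuclideanSpace ℝ (Fin d) → ℝ) (hcont : Continuous ℓ)
    (hsc : ConvexOn ℝ Set.univ (fun x => ℓ x - (μ / 2) * ‖x‖ ^ 2))
    (P : EuclideanSpace ℝ (Fin d) → EuclideanSpace ℝ (Fin d))
    (hP : ∀ v, IsMinOn (fun x => (1 / ρ) * ℓ x + (1 / 2) * ‖x - v‖ ^ 2) Set.univ (P v))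
    (ε δ : ℝ) (hε : ε ∈ Set.Ioo (0 : ℝ) 1) (hδ : 0 ≤ δ)
    (D : EuclideanSpace ℝ (Fin d) → EuclideanSpace ℝ (Fin d))
    (hD : ResidualCond ε δ D)
    (hstep : ε / (μ * (1 + ε - 2 * ε ^ 2)) < 1 / ρ)
    (T : EuclideanSpace ℝ (Fin d) → EuclideanSpace ℝ (Fin d))
    (hT : T = fun v =>
      (1 / 2 : ℝ) • v + (1 / 2 : ℝ) • (2 • D (2 • P v - v) - (2 • P v - v)))
    (εT δT2 : ℝ)
    (hεT : εT = (ρ + ρ * ε + μ * ε + 2 * μ * ε ^ 2) / (ρ + μ + 2 * μ * ε))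
    (hδT2 : δT2 = (ρ + ρ * ε + μ * ε + 2 * μ * ε ^ 2) * δ ^ 2 / (ε * (ρ + μ + 2 * μ * ε)))
    (vstar : EuclideanSpace ℝ (Fin d)) (hfix : T vstar = vstar)
    (v x : ℕ → EuclideanSpace ℝ (Fin d))
    (hv : ∀ k, v (k + 1) = T (v k))
    (hx : ∀ k, x k = P (v k))
    (xstar : EuclideanSpace ℝ (Fin d)) (hxstar : xstar = P vstar) :
    εT < 1 ∧
      ∀ r' : ℝ, Real.sqrt δT2 / Real.sqrt (1 - εT ^ 2) < r' →
        ∃ K : ℕ, ∀ k ≥ K,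
          ‖v k - vstar‖ ≤ r' ∧ ‖x k - xstar‖ ≤ (ρ / (ρ + μ)) * r' :=
  stmt19_general μ ρ hμ hρ ℓ hsc P hP ε δ hε D hD hstep T hT εT δT2 hεT hδT2 vstar hfix v x hv hx
    xstar hxstar
end
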